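/- Let Q be a word of length 0 or 1, let 1 ≤ i ≤ n−2, and let R be a word, such that both R_1 = Q·i(i+1)i·R and R_2 = Q·(i+1)i(i+1)·R are reduced words. Then there exists x ∈ S_n with wt_{R_1}(x) ≠ wt_{R_2}(x) in ℤ[q]; equivalently, the Bott–Samelson distributions 𝔓_{R_1,q} and 𝔓_{R_2,q} are different as rational functions of q. -/

import Mathlib

open scoped Classical

namespace BSDist

/-- The simple transposition `s i` (1-indexed): it swaps the values `i` and `i+1`
of `{1,…,n}`, i.e. the elements `i-1` and `i` of `Fin n`.  Out-of-range letters
give the identity. -/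
def sTr (n : ℕ) (i : ℕ) : Equiv.Perm (Fin n) :=
  if h : 1 ≤ i ∧ i < n then Equiv.swap ⟨i - 1, by omega⟩ ⟨i, h.2⟩ else 1

/-- The product `w(R) = s_{i₁} ⋯ s_{i_L}` of a word. -/
def wprod (n : ℕ) (R : List ℕ) : Equiv.Perm (Fin n) := (R.map (sTr n)).prod

/-- The Coxeter length of a permutation: its number of inversions. -/
def len {n : ℕ} (w : Equiv.Perm (Fin n)) : ℕ :=
  (Finset.univ.filter (fun p : Fin n × Fin n => p.1 < p.2 ∧ w p.2 < w p.1)).card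

/-- A word over the alphabet `{1,…,n-1}`. -/
def Alphabet (n : ℕ) (R : List ℕ) : Prop := ∀ i ∈ R, 1 ≤ i ∧ i < n

/-- `R` is a reduced word (over the alphabet `{1,…,n-1}`). -/
def IsReducedWord (n : ℕ) (R : List ℕ) : Prop :=
  Alphabet n R ∧ R.length = len (wprod n R)

/-- `R` is a reduced word for `w`. -/
def IsReducedWordFor (n : ℕ) (R : List ℕ) (w : Equiv.Perm (Fin n)) : Prop :=
  IsReducedWord n R ∧ wprod n R = w

/-- The weight `wt_R : S_n → ℤ[q]`, defined by the recursion
`wt_∅(e) = 1`, `wt_∅(x) = 0` for `x ≠ e`, and for an appended letter `i`: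
`wt_{Ri}(x) = wt_R(x) + wt_R(x sᵢ)` if `ℓ(x sᵢ) > ℓ(x)`, and
`wt_{Ri}(x) = q·wt_R(x) + q·wt_R(x sᵢ)` if `ℓ(x sᵢ) < ℓ(x)`. -/
noncomputable def wt (n : ℕ) (R : List ℕ) : Equiv.Perm (Fin n) → Polynomial ℤ :=
  R.foldl
    (fun f i x =>
      if len x < len (x * sTr n i) then f x + f (x * sTr n i)
      else Polynomial.X * f x + Polynomial.X * f (x * sTr n i))
    (fun x => if x = 1 then 1 else 0)

/-- A single commutation move: replace a consecutive factor `ij` by `ji` where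
`|i - j| > 1`. -/
def CommMove (R R' : List ℕ) : Prop :=
  ∃ (A B : List ℕ) (i j : ℕ), (i + 1 < j ∨ j + 1 < i) ∧
    R = A ++ [i, j] ++ B ∧ R' = A ++ [j, i] ++ B

/-- Commutation equivalence: a finite sequence of commutation moves. -/
def CommEquiv (R R' : List ℕ) : Prop := Relation.ReflTransGen CommMove R R'

/-- A single braid move: replace a consecutive factor `k(k+1)k` by `(k+1)k(k+1)`. -/
def BraidMove (R R' : List ℕ) : Prop :=
  ∃ (A B : List ℕ) (k : ℕ),
    R = A ++ [k, k + 1, k] ++ B ∧ R' = A ++ [k + 1, k, k + 1] ++ B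

/-- The Demazure product of a word, computed left to right:
`w ∗ sᵢ = w sᵢ` if `ℓ(w sᵢ) > ℓ(w)`, and `w ∗ sᵢ = w` otherwise. -/
def dem (n : ℕ) (R : List ℕ) : Equiv.Perm (Fin n) :=
  R.foldl (fun w i => if len w < len (w * sTr n i) then w * sTr n i else w) 1

/-- `app w t` is the value `w(t)` in 1-indexed one-line notation:
positions and values both run through `{1,…,n}`. -/
def app {n : ℕ} (w : Equiv.Perm (Fin n)) (t : ℕ) : ℕ :=
  if h : 1 ≤ t ∧ t ≤ n then ((w ⟨t - 1, by omega⟩ : Fin n) : ℕ) + 1 else 0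

/-- `posOf x t = x⁻¹(t)`, the (1-indexed) position of the value `t` in `x`. -/
def posOf {n : ℕ} (x : Equiv.Perm (Fin n)) (t : ℕ) : ℕ := app x⁻¹ t

/-- The longest element `w₀` of `S_n` (the order-reversing permutation). -/
def w0 (n : ℕ) : Equiv.Perm (Fin n) := ⟨Fin.rev, Fin.rev, Fin.rev_rev, Fin.rev_rev⟩

/-- The value pair `(a,b)` (with `a < b`) is an inversion of `x`:
`x⁻¹(a) > x⁻¹(b)`. -/
def IsInversion {n : ℕ} (x : Equiv.Perm (Fin n)) (a b : ℕ) : Prop :=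
  posOf x b < posOf x a

/-- `tau R a b` is the first time `k` at which the pair `(a,b)` is an inversion
of the prefix product `s_{i₁} ⋯ s_{i_k}`. -/
noncomputable def tau (n : ℕ) (R : List ℕ) (a b : ℕ) : ℕ :=
  sInf {k | IsInversion (wprod n (R.take k)) a b}

/-- `T_R(a,b,c) = +1` if `τ_R(a,b) < τ_R(b,c)` and `-1` otherwise. -/
noncomputable def T (n : ℕ) (R : List ℕ) (a b c : ℕ) : ℤ :=
  if tau n R a b < tau n R b c then 1 else -1

/-- `Supp(x) = {t : pos_x(t) ≠ pos_{w₀}(t)}`. -/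
noncomputable def Supp (n : ℕ) (x : Equiv.Perm (Fin n)) : Finset ℕ :=
  (Finset.Icc 1 n).filter (fun t => posOf x t ≠ posOf (w0 n) t)

/-- `Fwd(x) = {t : pos_x(t) < pos_{w₀}(t)}`. -/
noncomputable def Fwd (n : ℕ) (x : Equiv.Perm (Fin n)) : Finset ℕ :=
  (Finset.Icc 1 n).filter (fun t => posOf x t < posOf (w0 n) t)

/-- `Bwd(x) = {t : pos_x(t) > pos_{w₀}(t)}`. -/
noncomputable def Bwd (n : ℕ) (x : Equiv.Perm (Fin n)) : Finset ℕ :=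
  (Finset.Icc 1 n).filter (fun t => posOf (w0 n) t < posOf x t)

/-- `D_R(x)`: the coefficient of `q^{N-1}` in `wt_R(x)`, where `N = n(n-1)/2`. -/
noncomputable def D (n : ℕ) (R : List ℕ) (x : Equiv.Perm (Fin n)) : ℤ :=
  (wt n R x).coeff (n * (n - 1) / 2 - 1)

/-- `σ_b(x) = sign(pos_x(b) − pos_{w₀}(b)) ∈ {−1,0,+1}`. -/
noncomputable def sigmaVal (n : ℕ) (b : ℕ) (x : Equiv.Perm (Fin n)) : ℤ :=
  Int.sign ((posOf x b : ℤ) - (posOf (w0 n) b : ℤ))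

/-- `Θ_R(a,b,c) = Σ_{x : Supp(x) = [a,c]} D_R(x)·σ_b(x)`. -/
noncomputable def Theta (n : ℕ) (R : List ℕ) (a b c : ℕ) : ℤ :=
  ∑ x ∈ Finset.univ.filter (fun x : Equiv.Perm (Fin n) => Supp n x = Finset.Icc a c),
    D n R x * sigmaVal n b x

end BSDist

namespace BSDist

section Aux

variable {n : ℕ}

lemma sTr_of_range {j : ℕ} (h1 : 1 ≤ j) (h2 : j < n) :
    sTr n j = Equiv.swap (⟨j - 1, by omega⟩ : Fin n) ⟨j, h2⟩ := dif_pos ⟨h1, h2⟩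

lemma sTr_mul_self (j : ℕ) : sTr n j * sTr n j = 1 := by
  unfold sTr; split_ifs with h
  · exact Equiv.swap_mul_self _ _
  · simp

lemma sTr_inv (j : ℕ) : (sTr n j)⁻¹ = sTr n j :=
  inv_eq_of_mul_eq_one_right (sTr_mul_self j)

lemma sTr_mul_sTr_cancel (j : ℕ) (w : Equiv.Perm (Fin n)) :
    sTr n j * (sTr n j * w) = w := by
  rw [← mul_assoc, sTr_mul_self, one_mul]

lemma len_one : len (1 : Equiv.Perm (Fin n)) = 0 := by
  unfold len
  rw [Finset.card_eq_zero, Finset.filter_eq_empty_iff]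
  rintro ⟨p, q⟩ _ ⟨h1, h2⟩
  exact absurd h2 (not_lt.2 h1.le)

lemma len_inv (w : Equiv.Perm (Fin n)) : len w⁻¹ = len w := by
  unfold len
  apply Finset.card_bij' (fun p _ => (w⁻¹ p.2, w⁻¹ p.1)) (fun p _ => (w p.2, w p.1))
  · rintro ⟨p, q⟩ hpq
    simp only [Finset.mem_filter, Finset.mem_univ, true_and] at hpq ⊢
    exact ⟨hpq.2, by simpa using hpq.1⟩
  · rintro ⟨p, q⟩ hpq
    simp only [Finset.mem_filter, Finset.mem_univ, true_and] at hpq ⊢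
    exact ⟨hpq.2, by simpa using hpq.1⟩
  · rintro ⟨p, q⟩ _; simp
  · rintro ⟨p, q⟩ _; simp

/-- Key lemma: multiplying on the right by an adjacent swap at an ascent adds one inversion. -/
lemma len_mul_swap_of_lt {a b : Fin n} (hab : (a : ℕ) + 1 = (b : ℕ)) {w : Equiv.Perm (Fin n)}
    (h : w a < w b) : len (w * Equiv.swap a b) = len w + 1 := by
  classical
  set σ := Equiv.swap a b with hσ
  have hab' : a < b := by rw [Fin.lt_def]; omega
  have hmono : ∀ p q : Fin n, p < q → ¬(p = a ∧ q = b) → σ p < σ q := by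
    intro p q hpq hne
    have hv : (p : ℕ) < (q : ℕ) := hpq
    have hpq' : p ≠ q := ne_of_lt hpq
    rw [Fin.lt_def]
    by_cases hpa : p = a
    · have hqb : q ≠ b := fun hq => hne ⟨hpa, hq⟩
      have hqa : q ≠ a := fun h => hpq' (hpa.trans h.symm)
      have e1 : σ p = b := by rw [hpa, hσ]; exact Equiv.swap_apply_left a b
      have e2 : σ q = q := by rw [hσ]; exact Equiv.swap_apply_of_ne_of_ne hqa hqb
      rw [e1, e2]
      have v1 : (p : ℕ) = (a : ℕ) := congrArg Fin.val hpa
      have v2 : (q : ℕ) ≠ (b : ℕ) := fun h => hqb (Fin.ext h)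
      omega
    · by_cases hpb : p = b
      · have v1 : (p : ℕ) = (b : ℕ) := congrArg Fin.val hpb
        have hqa : q ≠ a := fun h => by
          have : (q : ℕ) = (a : ℕ) := congrArg Fin.val h
          omega
        have hqb : q ≠ b := fun h => hpq' (hpb.trans h.symm)
        have e1 : σ p = a := by rw [hpb, hσ]; exact Equiv.swap_apply_right a b
        have e2 : σ q = q := by rw [hσ]; exact Equiv.swap_apply_of_ne_of_ne hqa hqb
        rw [e1, e2]; omega
      · by_cases hqa : q = a
        · have v1 : (q : ℕ) = (a : ℕ) := congrArg Fin.val hqa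
          have e1 : σ q = b := by rw [hqa, hσ]; exact Equiv.swap_apply_left a b
          have e2 : σ p = p := by rw [hσ]; exact Equiv.swap_apply_of_ne_of_ne hpa hpb
          rw [e1, e2]; omega
        · by_cases hqb : q = b
          · have v1 : (q : ℕ) = (b : ℕ) := congrArg Fin.val hqb
            have v2 : (p : ℕ) ≠ (a : ℕ) := fun h => hpa (Fin.ext h)
            have e1 : σ q = a := by rw [hqb, hσ]; exact Equiv.swap_apply_right a b
            have e2 : σ p = p := by rw [hσ]; exact Equiv.swap_apply_of_ne_of_ne hpa hpb
            rw [e1, e2]; omega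
          · have e1 : σ p = p := by rw [hσ]; exact Equiv.swap_apply_of_ne_of_ne hpa hpb
            have e2 : σ q = q := by rw [hσ]; exact Equiv.swap_apply_of_ne_of_ne hqa hqb
            rw [e1, e2]; exact hv
  have hset : (Finset.univ.filter
        (fun p : Fin n × Fin n => p.1 < p.2 ∧ (w * σ) p.2 < (w * σ) p.1))
      = insert (a, b) ((Finset.univ.filter
          (fun p : Fin n × Fin n => p.1 < p.2 ∧ w p.2 < w p.1)).image
            (fun p => (σ p.1, σ p.2))) := by
    ext ⟨p, q⟩
    simp only [Finset.mem_insert, Finset.mem_image, Finset.mem_filter, Finset.mem_univ,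
      true_and, Prod.mk.injEq, Prod.exists]
    simp only [Equiv.Perm.mul_apply]
    constructor
    · rintro ⟨h1, h2⟩
      by_cases hab2 : p = a ∧ q = b
      · exact Or.inl hab2
      · refine Or.inr ⟨σ p, σ q, ⟨hmono p q h1 hab2, ?_⟩, ?_, ?_⟩
        · simpa [hσ, Equiv.swap_apply_self] using h2
        · simp [hσ, Equiv.swap_apply_self]
        · simp [hσ, Equiv.swap_apply_self]
    · rintro (⟨rfl, rfl⟩ | ⟨u, v, ⟨huv, h2⟩, hu, hv⟩)
      · exact ⟨hab', by simpa [hσ, Equiv.swap_apply_left, Equiv.swap_apply_right] using h⟩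
      · subst hu; subst hv
        refine ⟨hmono u v huv ?_, by simpa [hσ, Equiv.swap_apply_self] using h2⟩
        rintro ⟨rfl, rfl⟩
        exact absurd h2 (not_lt.2 h.le)
  have hnotmem : (a, b) ∉ (Finset.univ.filter
      (fun p : Fin n × Fin n => p.1 < p.2 ∧ w p.2 < w p.1)).image
        (fun p => (σ p.1, σ p.2)) := by
    rw [Finset.mem_image]
    rintro ⟨⟨u, v⟩, huv, heq⟩
    simp only [Prod.mk.injEq] at heq
    rw [Finset.mem_filter] at huv
    have hu : u = b := σ.injective (heq.1.trans (Equiv.swap_apply_right a b).symm)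
    have hv : v = a := σ.injective (heq.2.trans (Equiv.swap_apply_left a b).symm)
    rw [hu, hv] at huv
    exact absurd huv.2.1 (not_lt.2 hab'.le)
  have hinj : Function.Injective (fun p : Fin n × Fin n => (σ p.1, σ p.2)) := by
    rintro ⟨p, q⟩ ⟨p', q'⟩ h
    simp only [Prod.mk.injEq] at h
    exact Prod.ext (σ.injective h.1) (σ.injective h.2)
  unfold len
  rw [hset, Finset.card_insert_of_notMem hnotmem, Finset.card_image_of_injective _ hinj,
    Nat.add_comm]

end Aux
section Aux2

variable {n : ℕ}

lemma len_mul_sTr_asc {j : ℕ} (h1 : 1 ≤ j) (h2 : j < n) {w : Equiv.Perm (Fin n)}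
    (h : w ⟨j - 1, by omega⟩ < w ⟨j, h2⟩) :
    len (w * sTr n j) = len w + 1 := by
  rw [sTr_of_range h1 h2]
  exact len_mul_swap_of_lt (by simp; omega) h

lemma len_mul_sTr_desc {j : ℕ} (h1 : 1 ≤ j) (h2 : j < n) {w : Equiv.Perm (Fin n)}
    (h : w ⟨j, h2⟩ < w ⟨j - 1, by omega⟩) :
    len w = len (w * sTr n j) + 1 := by
  have key : len (w * sTr n j * sTr n j) = len (w * sTr n j) + 1 := by
    apply len_mul_sTr_asc h1 h2
    rw [sTr_of_range h1 h2]
    simpa [Equiv.Perm.mul_apply, Equiv.swap_apply_left, Equiv.swap_apply_right] using h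
  rwa [mul_assoc, sTr_mul_self, mul_one] at key

lemma len_mul_sTr_or {j : ℕ} (h1 : 1 ≤ j) (h2 : j < n) (w : Equiv.Perm (Fin n)) :
    len (w * sTr n j) = len w + 1 ∨ len w = len (w * sTr n j) + 1 := by
  have hne : w ⟨j - 1, by omega⟩ ≠ w ⟨j, h2⟩ := by
    intro h
    have h' := w.injective h
    rw [Fin.mk.injEq] at h'
    omega
  rcases lt_or_gt_of_ne hne with h | h
  · exact Or.inl (len_mul_sTr_asc h1 h2 h)
  · exact Or.inr (len_mul_sTr_desc h1 h2 h)

lemma len_mul_sTr_le (j : ℕ) (w : Equiv.Perm (Fin n)) :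
    len (w * sTr n j) ≤ len w + 1 := by
  by_cases hj : 1 ≤ j ∧ j < n
  · rcases len_mul_sTr_or hj.1 hj.2 w with h | h <;> omega
  · rw [show sTr n j = 1 from dif_neg hj, mul_one]; omega

lemma len_le_len_mul_sTr (j : ℕ) (w : Equiv.Perm (Fin n)) :
    len w ≤ len (w * sTr n j) + 1 := by
  by_cases hj : 1 ≤ j ∧ j < n
  · rcases len_mul_sTr_or hj.1 hj.2 w with h | h <;> omega
  · rw [show sTr n j = 1 from dif_neg hj, mul_one]; omega

lemma len_sTr_mul_le (j : ℕ) (w : Equiv.Perm (Fin n)) :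
    len (sTr n j * w) ≤ len w + 1 := by
  have : len ((sTr n j * w)⁻¹) ≤ len w⁻¹ + 1 := by
    rw [mul_inv_rev, sTr_inv]
    exact len_mul_sTr_le j w⁻¹
  rwa [len_inv, len_inv] at this

lemma len_le_len_sTr_mul (j : ℕ) (w : Equiv.Perm (Fin n)) :
    len w ≤ len (sTr n j * w) + 1 := by
  have := len_sTr_mul_le j (sTr n j * w)
  rwa [sTr_mul_sTr_cancel] at this

lemma wprod_nil : wprod n [] = 1 := rfl

lemma wprod_cons (j : ℕ) (R : List ℕ) : wprod n (j :: R) = sTr n j * wprod n R := by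
  simp [wprod]

lemma wprod_append (A B : List ℕ) : wprod n (A ++ B) = wprod n A * wprod n B := by
  simp [wprod]

lemma len_wprod_le (R : List ℕ) : len (wprod n R) ≤ R.length := by
  induction R with
  | nil => simp [wprod_nil, len_one]
  | cons j R ih =>
    rw [wprod_cons]
    have := len_sTr_mul_le (n := n) j (wprod n R)
    simp only [List.length_cons]
    omega

lemma swap_comm_of_ne {a b c d : Fin n} (h1 : a ≠ c) (h2 : a ≠ d) (h3 : b ≠ c) (h4 : b ≠ d) :
    Equiv.swap a b * Equiv.swap c d = Equiv.swap c d * Equiv.swap a b := by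
  have e1 : Equiv.swap c d a = a := Equiv.swap_apply_of_ne_of_ne h1 h2
  have e2 : Equiv.swap c d b = b := Equiv.swap_apply_of_ne_of_ne h3 h4
  have e3 : Equiv.swap a b c = c := Equiv.swap_apply_of_ne_of_ne h1.symm h3.symm
  have e4 : Equiv.swap a b d = d := Equiv.swap_apply_of_ne_of_ne h2.symm h4.symm
  ext x
  simp only [Equiv.Perm.mul_apply]
  by_cases hxa : x = a
  · rw [hxa, e1, Equiv.swap_apply_left, e2]
  · by_cases hxb : x = b
    · rw [hxb, e2, Equiv.swap_apply_right, e1]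
    · by_cases hxc : x = c
      · rw [hxc, e3, Equiv.swap_apply_left, e4]
      · by_cases hxd : x = d
        · rw [hxd, e4, Equiv.swap_apply_right, e3]
        · rw [Equiv.swap_apply_of_ne_of_ne hxa hxb, Equiv.swap_apply_of_ne_of_ne hxc hxd,
            Equiv.swap_apply_of_ne_of_ne hxa hxb]

lemma sTr_comm {j k : ℕ} (h1 : 1 ≤ j) (h2 : j < n) (h3 : 1 ≤ k) (h4 : k < n)
    (hfar : j + 1 < k ∨ k + 1 < j) :
    sTr n j * sTr n k = sTr n k * sTr n j := by
  rw [sTr_of_range h1 h2, sTr_of_range h3 h4]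
  apply swap_comm_of_ne <;> (intro h; rw [Fin.mk.injEq] at h; omega)

lemma sTr_braid {i : ℕ} (h1 : 1 ≤ i) (h2 : i + 1 < n) :
    sTr n i * sTr n (i + 1) * sTr n i = sTr n (i + 1) * sTr n i * sTr n (i + 1) := by
  have hi2 : i < n := by omega
  rw [sTr_of_range h1 hi2, sTr_of_range (by omega : 1 ≤ i + 1) h2]
  have ha : (⟨i + 1 - 1, by omega⟩ : Fin n) = ⟨i, hi2⟩ := by
    rw [Fin.ext_iff]; simp
  rw [ha]
  have hAB : (⟨i - 1, by omega⟩ : Fin n) ≠ ⟨i, hi2⟩ := by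
    intro h; rw [Fin.mk.injEq] at h; omega
  have hBC : (⟨i, hi2⟩ : Fin n) ≠ ⟨i + 1, h2⟩ := by
    intro h; rw [Fin.mk.injEq] at h; omega
  have hAC : (⟨i - 1, by omega⟩ : Fin n) ≠ ⟨i + 1, h2⟩ := by
    intro h; rw [Fin.mk.injEq] at h; omega
  set A : Fin n := ⟨i - 1, by omega⟩
  set B : Fin n := ⟨i, hi2⟩
  set C : Fin n := ⟨i + 1, h2⟩
  calc Equiv.swap A B * Equiv.swap B C * Equiv.swap A B
      = Equiv.swap B A * Equiv.swap C B * Equiv.swap B A := by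
        rw [Equiv.swap_comm A B, Equiv.swap_comm B C]
    _ = Equiv.swap A C := Equiv.swap_mul_swap_mul_swap hBC.symm hAC.symm
    _ = Equiv.swap C A := Equiv.swap_comm A C
    _ = Equiv.swap B C * Equiv.swap A B * Equiv.swap B C :=
        (Equiv.swap_mul_swap_mul_swap hAB hAC).symm

end Aux2
section Aux3

variable {n : ℕ}

/-- The weight evaluated at `q = 1`. -/
noncomputable def ev (n : ℕ) (R : List ℕ) (x : Equiv.Perm (Fin n)) : ℤ :=
  (wt n R x).eval 1

lemma ev_nil (x : Equiv.Perm (Fin n)) : ev n [] x = if x = 1 then 1 else 0 := by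
  unfold ev wt
  simp only [List.foldl_nil]
  split_ifs <;> simp

lemma ev_append_singleton (W : List ℕ) (j : ℕ) (x : Equiv.Perm (Fin n)) :
    ev n (W ++ [j]) x = ev n W x + ev n W (x * sTr n j) := by
  unfold ev wt
  rw [List.foldl_append, List.foldl_cons, List.foldl_nil]
  by_cases h : len x < len (x * sTr n j) <;> simp [h]

lemma ev_nonneg (R : List ℕ) (x : Equiv.Perm (Fin n)) : 0 ≤ ev n R x := by
  induction R using List.reverseRecOn generalizing x with
  | nil => rw [ev_nil]; split_ifs <;> norm_num
  | append_singleton W j ih =>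
    rw [ev_append_singleton]
    exact add_nonneg (ih x) (ih _)

lemma ev_wprod (R : List ℕ) : 1 ≤ ev n R (wprod n R) := by
  induction R using List.reverseRecOn with
  | nil => rw [wprod_nil, ev_nil, if_pos rfl]
  | append_singleton W j ih =>
    rw [ev_append_singleton]
    have h1 : wprod n (W ++ [j]) * sTr n j = wprod n W := by
      rw [wprod_append, wprod_cons, wprod_nil, mul_one, mul_assoc, sTr_mul_self, mul_one]
    rw [h1]
    have := ev_nonneg (n := n) W (wprod n (W ++ [j]))
    omega

lemma ev_eq_zero_of_len_gt (R : List ℕ) (x : Equiv.Perm (Fin n))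
    (h : R.length < len x) : ev n R x = 0 := by
  induction R using List.reverseRecOn generalizing x with
  | nil =>
    rw [ev_nil, if_neg]
    intro h1
    rw [h1, len_one] at h
    simp at h
  | append_singleton W j ih =>
    rw [List.length_append, List.length_singleton] at h
    rw [ev_append_singleton, ih x (by omega), ih (x * sTr n j) ?_, add_zero]
    have := len_le_len_mul_sTr (n := n) j x
    omega

end Aux3
section Aux4

variable {n : ℕ}

lemma mul_sTr_sTr (x : Equiv.Perm (Fin n)) (j : ℕ) : x * sTr n j * sTr n j = x := by
  rw [mul_assoc, sTr_mul_self, mul_one]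

lemma ev_nil_mul_comm (x g : Equiv.Perm (Fin n)) : ev n [] (x * g) = ev n [] (g * x) := by
  rw [ev_nil, ev_nil]
  congr 1
  simp only [eq_iff_iff]
  rw [mul_eq_one_iff_eq_inv, mul_eq_one_iff_inv_eq, eq_comm]

lemma ev_three (l1 l2 l3 : ℕ) (x : Equiv.Perm (Fin n)) :
    ev n [l1, l2, l3] x =
      ev n [] x + ev n [] (x * sTr n l1)
      + (ev n [] (x * sTr n l2) + ev n [] (x * sTr n l2 * sTr n l1))
      + (ev n [] (x * sTr n l3) + ev n [] (x * sTr n l3 * sTr n l1)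
        + (ev n [] (x * sTr n l3 * sTr n l2) + ev n [] (x * sTr n l3 * sTr n l2 * sTr n l1))) := by
  rw [show ([l1, l2, l3] : List ℕ) = [l1, l2] ++ [l3] from rfl, ev_append_singleton]
  rw [show ([l1, l2] : List ℕ) = [l1] ++ [l2] from rfl]
  rw [ev_append_singleton, ev_append_singleton]
  rw [show ([l1] : List ℕ) = [] ++ [l1] from rfl]
  rw [ev_append_singleton, ev_append_singleton, ev_append_singleton, ev_append_singleton]

lemma ev_four (l1 l2 l3 l4 : ℕ) (x : Equiv.Perm (Fin n)) :
    ev n [l1, l2, l3, l4] x =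
      ev n [l1, l2, l3] x + ev n [l1, l2, l3] (x * sTr n l4) := by
  rw [show ([l1, l2, l3, l4] : List ℕ) = [l1, l2, l3] ++ [l4] from rfl, ev_append_singleton]

lemma base3 {i : ℕ} (hi1 : 1 ≤ i) (hi2 : i + 1 < n) (x : Equiv.Perm (Fin n)) :
    ev n [i, i + 1, i] x - ev n [i + 1, i, i + 1] x
      = ev n [] (sTr n i * x) - ev n [] (sTr n (i + 1) * x) := by
  have r1 : ev n [] (sTr n i * x) = ev n [] (x * sTr n i) := ev_nil_mul_comm _ _
  have r2 : ev n [] (sTr n (i + 1) * x) = ev n [] (x * sTr n (i + 1)) := ev_nil_mul_comm _ _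
  rw [r1, r2, ev_three, ev_three]
  rw [mul_sTr_sTr, mul_sTr_sTr]
  have hbr : x * sTr n i * sTr n (i + 1) * sTr n i
      = x * sTr n (i + 1) * sTr n i * sTr n (i + 1) := by
    rw [mul_assoc, mul_assoc, mul_assoc, mul_assoc, ← mul_assoc (sTr n i),
      ← mul_assoc (sTr n (i+1)), sTr_braid hi1 hi2]
  rw [hbr]
  ring

lemma base4 {i : ℕ} (hi1 : 1 ≤ i) (hi2 : i + 1 < n) (q : ℕ) (x : Equiv.Perm (Fin n)) :
    ev n [q, i, i + 1, i] x - ev n [q, i + 1, i, i + 1] x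
      = ev n [] (sTr n i * x) - ev n [] (sTr n (i + 1) * x)
        + (ev n [] (sTr n i * (sTr n q * x)) - ev n [] (sTr n (i + 1) * (sTr n q * x))) := by
  have r1 : ev n [] (sTr n i * x) = ev n [] (x * sTr n i) := ev_nil_mul_comm _ _
  have r2 : ev n [] (sTr n (i + 1) * x) = ev n [] (x * sTr n (i + 1)) := ev_nil_mul_comm _ _
  have r3 : ev n [] (sTr n i * (sTr n q * x)) = ev n [] (x * sTr n i * sTr n q) := by
    rw [← mul_assoc, ev_nil_mul_comm (sTr n i * sTr n q) x, mul_assoc]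
  have r4 : ev n [] (sTr n (i + 1) * (sTr n q * x)) = ev n [] (x * sTr n (i + 1) * sTr n q) := by
    rw [← mul_assoc, ev_nil_mul_comm (sTr n (i + 1) * sTr n q) x, mul_assoc]
  rw [r1, r2, r3, r4]
  have hbr : x * sTr n i * sTr n (i + 1) * sTr n i
      = x * sTr n (i + 1) * sTr n i * sTr n (i + 1) := by
    rw [mul_assoc, mul_assoc, mul_assoc, mul_assoc, ← mul_assoc (sTr n i),
      ← mul_assoc (sTr n (i+1)), sTr_braid hi1 hi2]
  rw [ev_four, ev_four, ev_three, ev_three, ev_three, ev_three,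
    mul_sTr_sTr, mul_sTr_sTr, hbr]
  ring

lemma keyNil {i : ℕ} (hi1 : 1 ≤ i) (hi2 : i + 1 < n) (S : List ℕ) :
    ∀ x : Equiv.Perm (Fin n),
      ev n ([i, i + 1, i] ++ S) x - ev n ([i + 1, i, i + 1] ++ S) x
        = ev n S (sTr n i * x) - ev n S (sTr n (i + 1) * x) := by
  induction S using List.reverseRecOn with
  | nil =>
    intro x
    simp only [List.append_nil]
    exact base3 hi1 hi2 x
  | append_singleton T j ih =>
    intro x
    rw [← List.append_assoc, ← List.append_assoc, ev_append_singleton, ev_append_singleton,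
      ev_append_singleton, ev_append_singleton]
    have h1 := ih x
    have h2 := ih (x * sTr n j)
    simp only [← mul_assoc] at h1 h2 ⊢
    omega

lemma keyOne {i : ℕ} (hi1 : 1 ≤ i) (hi2 : i + 1 < n) (q : ℕ) (S : List ℕ) :
    ∀ x : Equiv.Perm (Fin n),
      ev n ([q, i, i + 1, i] ++ S) x - ev n ([q, i + 1, i, i + 1] ++ S) x
        = ev n S (sTr n i * x) - ev n S (sTr n (i + 1) * x)
          + (ev n S (sTr n i * (sTr n q * x)) - ev n S (sTr n (i + 1) * (sTr n q * x))) := by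
  induction S using List.reverseRecOn with
  | nil =>
    intro x
    simp only [List.append_nil]
    exact base4 hi1 hi2 q x
  | append_singleton T j ih =>
    intro x
    rw [← List.append_assoc, ← List.append_assoc, ev_append_singleton, ev_append_singleton,
      ev_append_singleton, ev_append_singleton, ev_append_singleton, ev_append_singleton]
    have h1 := ih x
    have h2 := ih (x * sTr n j)
    simp only [← mul_assoc] at h1 h2 ⊢
    omega

end Aux4
section Aux5

variable {n : ℕ}

lemma sTr_apply_fst {j : ℕ} (h1 : 1 ≤ j) (h2 : j < n) :
    sTr n j ⟨j - 1, by omega⟩ = ⟨j, h2⟩ := by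
  rw [sTr_of_range h1 h2]; exact Equiv.swap_apply_left _ _

lemma sTr_apply_snd {j : ℕ} (h1 : 1 ≤ j) (h2 : j < n) :
    sTr n j ⟨j, h2⟩ = ⟨j - 1, by omega⟩ := by
  rw [sTr_of_range h1 h2]; exact Equiv.swap_apply_right _ _

lemma sTr_apply_other {j : ℕ} (h1 : 1 ≤ j) (h2 : j < n) {t : Fin n}
    (ht1 : (t : ℕ) ≠ j - 1) (ht2 : (t : ℕ) ≠ j) : sTr n j t = t := by
  rw [sTr_of_range h1 h2]
  exact Equiv.swap_apply_of_ne_of_ne (fun h => ht1 (by rw [h])) (fun h => ht2 (by rw [h]))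

end Aux5

/-- Let `Q` be a word of length `0` or `1`, `1 ≤ i ≤ n−2`,
and `R` a word, such that `R₁ = Q·i(i+1)i·R` and `R₂ = Q·(i+1)i(i+1)·R` are
both reduced words.  Then there exists `x ∈ S_n` with
`wt_{R₁}(x) ≠ wt_{R₂}(x)`; equivalently, the Bott–Samelson distributions
`𝔓_{R₁,q}` and `𝔓_{R₂,q}` differ as rational functions of `q`. -/
theorem short_prefix_braid_separation
    (n : ℕ) (hn : 3 ≤ n) (Q R : List ℕ) (hQ : Q.length ≤ 1)
    (i : ℕ) (hi : 1 ≤ i ∧ i ≤ n - 2)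
    (h₁ : IsReducedWord n (Q ++ [i, i + 1, i] ++ R))
    (h₂ : IsReducedWord n (Q ++ [i + 1, i, i + 1] ++ R)) :
    ∃ x : Equiv.Perm (Fin n),
      wt n (Q ++ [i, i + 1, i] ++ R) x ≠ wt n (Q ++ [i + 1, i, i + 1] ++ R) x := by
  obtain ⟨hi1, hi2⟩ := hi
  have hi2' : i + 1 < n := by omega
  have hin : i < n := by omega
  refine ⟨sTr n i * wprod n R, fun hEq => ?_⟩
  have hEv : ev n (Q ++ [i, i + 1, i] ++ R) (sTr n i * wprod n R)
      = ev n (Q ++ [i + 1, i, i + 1] ++ R) (sTr n i * wprod n R) := by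
    unfold ev; rw [hEq]
  have hvR : len (wprod n R) ≤ R.length := len_wprod_le R
  have c1 := len_sTr_mul_le (n := n) i (wprod n R)
  have c2 := len_sTr_mul_le (n := n) (i + 1) (sTr n i * wprod n R)
  have c3 := len_sTr_mul_le (n := n) i (sTr n (i + 1) * (sTr n i * wprod n R))
  have hpos := ev_wprod (n := n) R
  rcases Q with _ | ⟨j, Q'⟩
  · -- Q = []
    simp only [List.nil_append] at hEv h₁
    have hkey := keyNil (n := n) hi1 hi2' R (sTr n i * wprod n R)
    rw [sTr_mul_sTr_cancel] at hkey
    have hw1 : wprod n ([i, i + 1, i] ++ R)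
        = sTr n i * (sTr n (i + 1) * (sTr n i * wprod n R)) := by
      simp [wprod_append, wprod_cons, wprod_nil, mul_assoc]
    have htot : R.length + 3 = len (sTr n i * (sTr n (i + 1) * (sTr n i * wprod n R))) := by
      have h := h₁.2
      rw [hw1] at h
      simp only [List.length_append, List.length_cons, List.length_nil] at h
      omega
    have hzero : ev n R (sTr n (i + 1) * (sTr n i * wprod n R)) = 0 :=
      ev_eq_zero_of_len_gt _ _ (by omega)
    omega
  · -- Q = [j]
    have hQ'nil : Q' = [] := by
      cases Q' with
      | nil => rfl
      | cons _ _ => simp at hQ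
    subst hQ'nil
    have hj : 1 ≤ j ∧ j < n := h₁.1 j (by simp)
    simp only [List.cons_append, List.nil_append] at hEv h₁
    have hkey := keyOne (n := n) hi1 hi2' j R (sTr n i * wprod n R)
    rw [sTr_mul_sTr_cancel] at hkey
    simp only [List.cons_append, List.nil_append] at hkey
    have hw1 : wprod n (j :: i :: (i + 1) :: i :: R)
        = sTr n j * (sTr n i * (sTr n (i + 1) * (sTr n i * wprod n R))) := by
      simp [wprod_cons]
    have htot : R.length + 4
        = len (sTr n j * (sTr n i * (sTr n (i + 1) * (sTr n i * wprod n R)))) := by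
      have h := h₁.2
      rw [hw1] at h
      simp only [List.length_cons] at h
      omega
    have c4 := len_sTr_mul_le (n := n) j (sTr n i * (sTr n (i + 1) * (sTr n i * wprod n R)))
    have hL1 : len (sTr n i * wprod n R) = R.length + 1 := by omega
    have hL2 : len (sTr n (i + 1) * (sTr n i * wprod n R)) = R.length + 2 := by omega
    have hL3 : len (sTr n i * (sTr n (i + 1) * (sTr n i * wprod n R))) = R.length + 3 := by
      omega
    have hzero : ev n R (sTr n (i + 1) * (sTr n i * wprod n R)) = 0 :=
      ev_eq_zero_of_len_gt _ _ (by omega)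
    have hnn := ev_nonneg (n := n) R (sTr n i * (sTr n j * (sTr n i * wprod n R)))
    have hlen4 : R.length < len (sTr n (i + 1) * (sTr n j * (sTr n i * wprod n R))) := by
      by_cases hji : j = i
      · exfalso
        subst hji
        rw [sTr_mul_sTr_cancel] at htot
        omega
      · by_cases hji1 : j = i + 1
        · subst hji1
          rw [sTr_mul_sTr_cancel]
          omega
        · by_cases hji2 : j = i + 2
          · -- the interesting case
            subst hji2
            have hn2 : i + 2 < n := hj.2
            have him1 : i - 1 < n := by omega
            have a1 : sTr n i (⟨i - 1, him1⟩ : Fin n) = ⟨i, hin⟩ := sTr_apply_fst hi1 hin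
            have a2 : sTr n (i + 1) (⟨i, hin⟩ : Fin n) = ⟨i + 1, hi2'⟩ :=
              sTr_apply_fst (by omega) hi2'
            have a3 : sTr n i (⟨i + 1, hi2'⟩ : Fin n) = ⟨i + 1, hi2'⟩ :=
              sTr_apply_other hi1 hin (by show i + 1 ≠ i - 1; omega)
                (by show i + 1 ≠ i; omega)
            have a4 : sTr n i (⟨i + 2, hn2⟩ : Fin n) = ⟨i + 2, hn2⟩ :=
              sTr_apply_other hi1 hin (by show i + 2 ≠ i - 1; omega)
                (by show i + 2 ≠ i; omega)
            have a5 : sTr n (i + 1) (⟨i + 2, hn2⟩ : Fin n) = ⟨i + 2, hn2⟩ :=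
              sTr_apply_other (by omega : 1 ≤ i + 1) hi2'
                (by show i + 2 ≠ i + 1 - 1; omega) (by show i + 2 ≠ i + 1; omega)
            have a6 : sTr n (i + 2) (⟨i, hin⟩ : Fin n) = ⟨i, hin⟩ :=
              sTr_apply_other (by omega : 1 ≤ i + 2) hn2
                (by show i ≠ i + 2 - 1; omega) (by show i ≠ i + 2; omega)
            have a7 : sTr n (i + 2) (⟨i + 2, hn2⟩ : Fin n) = ⟨i + 1, hi2'⟩ :=
              sTr_apply_snd (by omega : 1 ≤ i + 2) hn2
            -- Step A: from htot, an ascent of X⁻¹ at the pair (i+1, i+2)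
            have htot' : len ((sTr n i * (sTr n (i + 1) * (sTr n i * wprod n R)))⁻¹
                * sTr n (i + 2)) = R.length + 4 := by
              have h' : len ((sTr n (i + 2) * (sTr n i * (sTr n (i + 1)
                  * (sTr n i * wprod n R))))⁻¹) = R.length + 4 := by
                rw [len_inv]; omega
              rwa [mul_inv_rev, sTr_inv] at h'
            have hXinv : len ((sTr n i * (sTr n (i + 1) * (sTr n i * wprod n R)))⁻¹)
                = R.length + 3 := by rw [len_inv]; omega
            have hne : (sTr n i * (sTr n (i + 1) * (sTr n i * wprod n R)))⁻¹ ⟨i + 1, hi2'⟩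
                ≠ (sTr n i * (sTr n (i + 1) * (sTr n i * wprod n R)))⁻¹ ⟨i + 2, hn2⟩ := by
              intro h
              have h' := (sTr n i * (sTr n (i + 1) * (sTr n i * wprod n R)))⁻¹.injective h
              rw [Fin.mk.injEq] at h'
              omega
            have hAD : (sTr n i * (sTr n (i + 1) * (sTr n i * wprod n R)))⁻¹ ⟨i + 1, hi2'⟩
                < (sTr n i * (sTr n (i + 1) * (sTr n i * wprod n R)))⁻¹ ⟨i + 2, hn2⟩ := by
              rcases lt_or_gt_of_ne hne with h | h
              · exact h
              · exfalso
                have hdesc := len_mul_sTr_desc (n := n) (by omega : 1 ≤ i + 2) hn2 h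
                omega
            -- translate hAD to v⁻¹
            have hx1 : (sTr n i * (sTr n (i + 1) * (sTr n i * wprod n R)))
                ((wprod n R)⁻¹ ⟨i - 1, him1⟩) = ⟨i + 1, hi2'⟩ := by
              simp only [Equiv.Perm.mul_apply, Equiv.Perm.inv_def, Equiv.apply_symm_apply]
              rw [a1, a2, a3]
            have hx2 : (sTr n i * (sTr n (i + 1) * (sTr n i * wprod n R)))
                ((wprod n R)⁻¹ ⟨i + 2, hn2⟩) = ⟨i + 2, hn2⟩ := by
              simp only [Equiv.Perm.mul_apply, Equiv.Perm.inv_def, Equiv.apply_symm_apply]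
              rw [a4, a5, a4]
            have hx1' : (sTr n i * (sTr n (i + 1) * (sTr n i * wprod n R)))⁻¹ ⟨i + 1, hi2'⟩
                = (wprod n R)⁻¹ ⟨i - 1, him1⟩ := by
              rw [Equiv.Perm.inv_eq_iff_eq]
              exact hx1.symm
            have hx2' : (sTr n i * (sTr n (i + 1) * (sTr n i * wprod n R)))⁻¹ ⟨i + 2, hn2⟩
                = (wprod n R)⁻¹ ⟨i + 2, hn2⟩ := by
              rw [Equiv.Perm.inv_eq_iff_eq]
              exact hx2.symm
            rw [hx1', hx2'] at hAD
            -- Step B: ascent for u = sTr (i+2) * (sTr i * v)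
            have hu1 : (sTr n (i + 2) * (sTr n i * wprod n R))
                ((wprod n R)⁻¹ ⟨i - 1, him1⟩) = ⟨i, hin⟩ := by
              simp only [Equiv.Perm.mul_apply, Equiv.Perm.inv_def, Equiv.apply_symm_apply]
              rw [a1, a6]
            have hu2 : (sTr n (i + 2) * (sTr n i * wprod n R))
                ((wprod n R)⁻¹ ⟨i + 2, hn2⟩) = ⟨i + 1, hi2'⟩ := by
              simp only [Equiv.Perm.mul_apply, Equiv.Perm.inv_def, Equiv.apply_symm_apply]
              rw [a4, a7]
            have hu1' : (sTr n (i + 2) * (sTr n i * wprod n R))⁻¹ ⟨i, hin⟩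
                = (wprod n R)⁻¹ ⟨i - 1, him1⟩ := by
              rw [Equiv.Perm.inv_eq_iff_eq]
              exact hu1.symm
            have hu2' : (sTr n (i + 2) * (sTr n i * wprod n R))⁻¹ ⟨i + 1, hi2'⟩
                = (wprod n R)⁻¹ ⟨i + 2, hn2⟩ := by
              rw [Equiv.Perm.inv_eq_iff_eq]
              exact hu2.symm
            have hasc : (sTr n (i + 2) * (sTr n i * wprod n R))⁻¹ ⟨i, hin⟩
                < (sTr n (i + 2) * (sTr n i * wprod n R))⁻¹ ⟨i + 1, hi2'⟩ := by
              rw [hu1', hu2']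
              exact hAD
            have hascl := len_mul_sTr_asc (n := n) (by omega : 1 ≤ i + 1) hi2' hasc
            have hfin : len (sTr n (i + 1) * (sTr n (i + 2) * (sTr n i * wprod n R)))
                = len (sTr n (i + 2) * (sTr n i * wprod n R)) + 1 := by
              have h' : len ((sTr n (i + 1) * (sTr n (i + 2) * (sTr n i * wprod n R)))⁻¹)
                  = len ((sTr n (i + 2) * (sTr n i * wprod n R))⁻¹) + 1 := by
                rw [mul_inv_rev, sTr_inv]
                exact hascl
              rwa [len_inv, len_inv] at h'
            have hulen := len_le_len_sTr_mul (n := n) (i + 2) (sTr n i * wprod n R)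
            omega
          · -- commuting case
            have hfar : (i + 1) + 1 < j ∨ j + 1 < i + 1 := by omega
            have hcomm := sTr_comm (n := n) (by omega : 1 ≤ i + 1) hi2' hj.1 hj.2 hfar
            have hsw : sTr n (i + 1) * (sTr n j * (sTr n i * wprod n R))
                = sTr n j * (sTr n (i + 1) * (sTr n i * wprod n R)) := by
              rw [← mul_assoc, hcomm, mul_assoc]
            rw [hsw]
            have := len_le_len_sTr_mul (n := n) j (sTr n (i + 1) * (sTr n i * wprod n R))
            omega
    have hzero4 : ev n R (sTr n (i + 1) * (sTr n j * (sTr n i * wprod n R))) = 0 :=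
      ev_eq_zero_of_len_gt _ _ hlen4
    omega

end BSDist
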